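/- arXiv:math/0510499 — 2 statements merged into one kernel-verified Lean document; each statement's English description precedes it below -/
import Mathlib

section
/- There exists an 8-dimensional binary linear code U ⊆ (ℤ/2)^51 all of whose nonzero words have weight in {24, 32}. -/
set_option maxRecDepth 100000
set_option maxHeartbeats 4000000

/-- The weight of a word in `(ℤ/2)^μ`: the number of nonzero coordinates. -/
def codeWeight {μ : ℕ} (v : Fin μ → ZMod 2) : ℕ :=
  (Finset.univ.filter fun i => v i ≠ 0).card

/-- Coefficients of the generator polynomial `g = (x^51-1)/P` over `GF(2)`. -/
def genCoeffs : List (ZMod 2) :=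
  [1, 1, 1, 0, 0, 0, 1, 1, 0, 0, 1, 0, 0, 1, 1, 0, 1, 1, 1, 0, 0, 1, 1, 1, 1, 0,
   1, 1, 0, 0, 1, 1, 0, 1, 0, 0, 1, 0, 1, 1, 0, 0, 0, 1]

/-- Generator matrix: row `j` is the `j`-th cyclic shift of `g`. -/
def genMat : Matrix (Fin 8) (Fin 51) (ZMod 2) :=
  fun j i => if (j : ℕ) ≤ (i : ℕ) then genCoeffs.getD ((i : ℕ) - (j : ℕ)) 0 else 0

lemma genMat_inj : Function.Injective genMat.vecMulLinear := by
  rw [← LinearMap.ker_eq_bot, LinearMap.ker_eq_bot']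
  have h : ∀ c : Fin 8 → ZMod 2, Matrix.vecMul c genMat = 0 → c = 0 := by decide
  intro c hc
  exact h c (by simpa [Matrix.vecMulLinear] using hc)

lemma genMat_weights : ∀ c : Fin 8 → ZMod 2, c ≠ 0 →
    codeWeight (Matrix.vecMul c genMat) = 24 ∨ codeWeight (Matrix.vecMul c genMat) = 32 := by
  decide

/-- There exists an 8-dimensional binary linear code `U ⊆ (ℤ/2)^51`
all of whose nonzero words have weight in `{24, 32}`. -/
theorem statement2 :
    ∃ U : Submodule (ZMod 2) (Fin 51 → ZMod 2),
      Module.finrank (ZMod 2) U = 8 ∧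
      ∀ v ∈ U, v ≠ 0 → codeWeight v ∈ ({24, 32} : Set ℕ) := by
  refine ⟨LinearMap.range genMat.vecMulLinear, ?_, ?_⟩
  · rw [LinearMap.finrank_range_of_inj genMat_inj]
    simp
  · rintro v ⟨c, rfl⟩ hv
    have hc : c ≠ 0 := by
      rintro rfl
      exact hv (map_zero _)
    have := genMat_weights c hc
    simpa [Matrix.vecMulLinear, Set.mem_insert_iff] using this
end

section
/- Let W', U' be 3-dimensional k-vector spaces with bases e₁,e₂,e₃ and f₁,f₂,f₃, V a 4-dimensional space, and B₀ ∈ Hom(W' ⊗ V^∨, U') the tensor given (in the dual basis x₀^∨,…,x₃^∨ of V^∨) by the matrix B₀ = ((x₀,−x₃,x₂),(x₃,x₀,−x₁),(−x₂,x₁,x₀)). Then the kernel U of the contraction B̃₀ : Λ²W' ⊗ V^∨ → U' ⊗ W' is 3-dimensional, spanned by (x₀^∨, x₃^∨, −x₂^∨), (−x₃^∨, x₀^∨, x₁^∨), (x₂^∨, −x₁^∨, x₀^∨) (coordinates with respect to the basis e₂∧e₃, −e₁∧e₃, e₁∧e₂ of Λ²W'), and the resulting cross-product-transformed 3×3×4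 tensor, written in these bases, is again B₀. -/
set_option maxHeartbeats 1000000

open Finset

/-- The coefficient matrices of the tensor `B₀`: `B₀ = Σ_l x_l · Bmat l`, i.e.
`B₀ = ((x₀, −x₃, x₂), (x₃, x₀, −x₁), (−x₂, x₁, x₀))`. -/
def BmatCoeff (k : Type*) [Field k] : Fin 4 → Matrix (Fin 3) (Fin 3) k :=
  ![1,
    !![0, 0, 0; 0, 0, -1; 0, 1, 0],
    !![0, 0, 1; 0, 0, 0; -1, 0, 0],
    !![0, -1, 0; 1, 0, 0; 0, 0, 0]]

/-- The contraction `B̃₀ : Λ²W' ⊗ V^∨ → U' ⊗ W'` of the tensor `B₀`, written in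
coordinates: elements of `Λ²W' ⊗ V^∨` are matrices `a : Matrix (Fin 3) (Fin 4) k`
(with respect to the basis `e₂∧e₃, −e₁∧e₃, e₁∧e₂` of `Λ²W'` and the dual basis
`x₀^∨,…,x₃^∨` of `V^∨`), and elements of `U' ⊗ W'` are `3×3` matrices. -/
def Btilde0 (k : Type*) [Field k] (a : Matrix (Fin 3) (Fin 4) k) :
    Matrix (Fin 3) (Fin 3) k :=
  Matrix.of fun i q =>
    ∑ l : Fin 4,
      (a (q + 1) l * BmatCoeff k l i (q + 2) - a (q + 2) l * BmatCoeff k l i (q + 1))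

/-- The three claimed kernel generators `(x₀^∨, x₃^∨, −x₂^∨)`, `(−x₃^∨, x₀^∨, x₁^∨)`,
`(x₂^∨, −x₁^∨, x₀^∨)`, as coordinate matrices. -/
def kerGen (k : Type*) [Field k] : Fin 3 → Matrix (Fin 3) (Fin 4) k :=
  ![!![1, 0, 0, 0; 0, 0, 0, 1; 0, 0, -1, 0],
    !![0, 0, 0, -1; 1, 0, 0, 0; 0, 1, 0, 0],
    !![0, 0, 1, 0; 0, -1, 0, 0; 1, 0, 0, 0]]

lemma btilde_add (x y : Matrix (Fin 3) (Fin 4) ℂ) :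
    Btilde0 ℂ (x + y) = Btilde0 ℂ x + Btilde0 ℂ y := by
  funext i q
  simp [Btilde0, Fin.sum_univ_four, Matrix.add_apply]
  ring

lemma btilde_smul (c : ℂ) (x : Matrix (Fin 3) (Fin 4) ℂ) :
    Btilde0 ℂ (c • x) = c • Btilde0 ℂ x := by
  funext i q
  simp [Btilde0, Fin.sum_univ_four, Matrix.smul_apply, smul_eq_mul]
  ring

lemma btilde_gen (j : Fin 3) : Btilde0 ℂ (kerGen ℂ j) = 0 := by
  funext i q
  fin_cases j <;> fin_cases i <;> fin_cases q <;>
    simp [Btilde0, kerGen, BmatCoeff, Fin.sum_univ_four, Matrix.one_apply,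
      Matrix.vecHead, Matrix.vecTail]

/-- For the tensor `B₀ = ((x₀,−x₃,x₂),(x₃,x₀,−x₁),(−x₂,x₁,x₀))`, the
kernel `U` of the contraction `B̃₀ : Λ²W' ⊗ V^∨ → U' ⊗ W'` is 3-dimensional, spanned by
the three vectors `(x₀^∨, x₃^∨, −x₂^∨)`, `(−x₃^∨, x₀^∨, x₁^∨)`, `(x₂^∨, −x₁^∨, x₀^∨)`,
and the resulting cross-product-transformed `3×3×4` tensor, written in these bases, is
again `B₀` (its coefficient of `x_l` in entry `(i,j)` is `BmatCoeff l i j`). -/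
theorem statement17 :
    {a : Matrix (Fin 3) (Fin 4) ℂ | Btilde0 ℂ a = 0} =
      ↑(Submodule.span ℂ {kerGen ℂ 0, kerGen ℂ 1, kerGen ℂ 2}) ∧
    LinearIndependent ℂ (kerGen ℂ) ∧
    (∀ (j i : Fin 3) (l : Fin 4), kerGen ℂ j i l = BmatCoeff ℂ l i j) := by
  refine ⟨?_, ?_, ?_⟩
  · ext a
    simp only [Set.mem_setOf_eq, SetLike.mem_coe]
    constructor
    · intro h
      have e : ∀ i q : Fin 3, Btilde0 ℂ a i q = 0 := fun i q => by rw [h]; rfl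
      have e00 := e 0 0; have e01 := e 0 1; have e02 := e 0 2
      have e10 := e 1 0; have e11 := e 1 1; have e12 := e 1 2
      have e20 := e 2 0; have e21 := e 2 1; have e22 := e 2 2
      simp [Btilde0, BmatCoeff, Fin.sum_univ_four, Matrix.one_apply, Matrix.vecHead,
        Matrix.vecTail, show ((0:Fin 3)+1) = 1 from rfl, show ((0:Fin 3)+2) = 2 from rfl,
        show ((1:Fin 3)+1) = 2 from rfl, show ((1:Fin 3)+2) = 0 from rfl,
        show ((2:Fin 3)+1) = 0 from rfl, show ((2:Fin 3)+2) = 1 from rfl]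
        at e00 e01 e02 e10 e11 e12 e20 e21 e22
      have key : a = a 0 0 • kerGen ℂ 0 + a 1 0 • kerGen ℂ 1 + a 2 0 • kerGen ℂ 2 := by
        funext i l
        have h1 : (a 0 0 • kerGen ℂ 0 + a 1 0 • kerGen ℂ 1 + a 2 0 • kerGen ℂ 2) i l
            = a 0 0 * kerGen ℂ 0 i l + a 1 0 * kerGen ℂ 1 i l + a 2 0 * kerGen ℂ 2 i l := rfl
        rw [h1]
        fin_cases i <;> fin_cases l <;>
          simp [kerGen, Matrix.vecHead, Matrix.vecTail] <;>
          first
            | rfl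
            | linear_combination (-1/2 : ℂ) * e00 + (1/2 : ℂ) * e11 + (1/2 : ℂ) * e22
            | linear_combination (-1 : ℂ) * e01
            | linear_combination (-1 : ℂ) * e02
            | linear_combination (-1 : ℂ) * e10
            | linear_combination (1/2 : ℂ) * e00 + (-1/2 : ℂ) * e11 + (1/2 : ℂ) * e22
            | linear_combination (-1 : ℂ) * e12
            | linear_combination (-1 : ℂ) * e20
            | linear_combination (-1 : ℂ) * e21
            | linear_combination (1/2 : ℂ) * e00 + (1/2 : ℂ) * e11 + (-1/2 : ℂ) * e22
      rw [key]
      have m0 : kerGen ℂ 0 ∈ Submodule.span ℂ {kerGen ℂ 0, kerGen ℂ 1, kerGen ℂ 2} :=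
        Submodule.subset_span (by simp)
      have m1 : kerGen ℂ 1 ∈ Submodule.span ℂ {kerGen ℂ 0, kerGen ℂ 1, kerGen ℂ 2} :=
        Submodule.subset_span (by simp)
      have m2 : kerGen ℂ 2 ∈ Submodule.span ℂ {kerGen ℂ 0, kerGen ℂ 1, kerGen ℂ 2} :=
        Submodule.subset_span (by simp)
      exact Submodule.add_mem _ (Submodule.add_mem _ (Submodule.smul_mem _ _ m0)
        (Submodule.smul_mem _ _ m1)) (Submodule.smul_mem _ _ m2)
    · intro h
      induction h using Submodule.span_induction with
      | mem x hx =>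
        rcases hx with h | h | h <;> subst h <;> exact btilde_gen _
      | zero =>
        funext i q; simp [Btilde0]
      | add x y _ _ hx hy =>
        rw [btilde_add, hx, hy, add_zero]
      | smul c x _ hx =>
        rw [btilde_smul, hx, smul_zero]
  · rw [Fintype.linearIndependent_iff]
    intro g hg i
    have h := congrFun (congrFun hg i) 0
    fin_cases i <;>
      simpa [Fin.sum_univ_three, kerGen, Matrix.sum_apply, Matrix.vecHead,
        Matrix.vecTail] using h
  · intro j i l
    fin_cases j <;> fin_cases i <;> fin_cases l <;>
      simp [kerGen, BmatCoeff, Matrix.one_apply, Matrix.vecHead, Matrix.vecTail]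
end
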